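/- arXiv:math/0309281 — 2 statements merged into one kernel-verified Lean document; each statement's English description precedes it below -/
import Mathlib

section
/- For all nonnegative integers k and ℓ, the Gaussian binomial coefficient [k+ℓ choose k]_q equals 1 + Σ_{i=1}^{k} Σ_{j=0}^{k-i} q^i · [ℓ choose i]_q · q^{j(ℓ-i+1)} · [i+j-1 choose j]_q. -/
/-!
Pascal's rule `[n+1, m+1] = [n, m] + q^(m+1) [n, m+1]` telescopes `[k+ℓ, k]` into
`1 + ∑_{m<k} q^(m+1) [m+ℓ, m+1]`. The q-Vandermonde identity splits `[ℓ+m, m+1]` according to how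
many of the `m+1` chosen elements come from the first `ℓ`; calling that number `i` and setting
`j = m+1-i`, the summand becomes `q^i [ℓ, i] q^(j(ℓ-i+1)) [i+j-1, j]`, and regrouping the double
sum by `i` gives the decomposition.
-/

open Polynomial Finset

/-- The Gaussian (q-)binomial coefficient `[n choose k]_q`, as a polynomial in `q`
over `ℚ`, defined by the Pascal-type recurrence
`[n+1, k+1] = [n, k] + q^(k+1) * [n, k+1]`. -/
noncomputable def gaussBinom : ℕ → ℕ → Polynomial ℚ
  | _, 0 => 1
  | 0, _ + 1 => 0
  | n + 1, k + 1 => gaussBinom n k + Polynomial.X ^ (k + 1) * gaussBinom n (k + 1)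

@[simp]
lemma gaussBinom_zero_right (n : ℕ) : gaussBinom n 0 = 1 := by
  cases n <;> rfl

lemma gaussBinom_succ_succ (n k : ℕ) :
    gaussBinom (n + 1) (k + 1) = gaussBinom n k + X ^ (k + 1) * gaussBinom n (k + 1) :=
  rfl

lemma gaussBinom_eq_zero_of_lt {n k : ℕ} (h : n < k) : gaussBinom n k = 0 := by
  induction n generalizing k with
  | zero => obtain ⟨k, rfl⟩ := Nat.exists_eq_succ_of_ne_zero (by omega : k ≠ 0); rfl
  | succ n ih =>
    obtain ⟨k, rfl⟩ := Nat.exists_eq_succ_of_ne_zero (by omega : k ≠ 0)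
    rw [gaussBinom_succ_succ, ih (by omega), ih (by omega), mul_zero, add_zero]

lemma gaussBinom_add (m n r : ℕ) :
    gaussBinom (m + n) r =
      ∑ p ∈ antidiagonal r, X ^ ((m - p.1) * p.2) * gaussBinom m p.1 * gaussBinom n p.2 := by
  induction m generalizing r with
  | zero =>
    rw [sum_eq_single_of_mem (0, r) (by simp)]
    · simp
    · rintro ⟨i, j⟩ hij hne
      rw [HasAntidiagonal.mem_antidiagonal] at hij
      rw [gaussBinom_eq_zero_of_lt (by grind : 0 < i), mul_zero, zero_mul]
  | succ m ih =>
    cases r with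
    | zero => simp
    | succ r =>
      -- `q^(r+1)` is absorbed into the exponent as `p.1 + p.2 = r`; both sides vanish if `m ≤ p.1`.
      have absorb : ∀ p ∈ antidiagonal r,
          X ^ (r + 1) * (X ^ ((m - (p.1 + 1)) * p.2) * gaussBinom m (p.1 + 1) * gaussBinom n p.2) =
            X ^ ((m - p.1) * p.2) * (X ^ (p.1 + 1) * gaussBinom m (p.1 + 1)) *
              gaussBinom n p.2 := by
        rintro ⟨i, j⟩ hij
        rw [HasAntidiagonal.mem_antidiagonal] at hij
        subst hij
        rcases le_or_gt (i + 1) m with hm | hm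
        · obtain ⟨c, rfl⟩ := Nat.exists_eq_add_of_le hm
          rw [show i + 1 + c - (i + 1) = c by omega, show i + 1 + c - i = c + 1 by omega]
          ring
        · simp [gaussBinom_eq_zero_of_lt hm]
      rw [show m + 1 + n = m + n + 1 by omega, gaussBinom_succ_succ, ih, ih,
        Nat.sum_antidiagonal_succ, Nat.sum_antidiagonal_succ, mul_add, mul_sum,
        sum_congr rfl absorb]
      simp only [gaussBinom_succ_succ, Nat.sub_zero, Nat.add_sub_add_right, gaussBinom_zero_right,
        mul_add, add_mul, sum_add_distrib]
      ring

lemma gaussBinom_add_self_eq_one_add_sum (k ℓ : ℕ) :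
    gaussBinom (k + ℓ) k = 1 + ∑ m ∈ range k, X ^ (m + 1) * gaussBinom (m + ℓ) (m + 1) := by
  induction k with
  | zero => simp
  | succ k ih =>
    rw [sum_range_succ, ← add_assoc, ← ih, show k + 1 + ℓ = k + ℓ + 1 by omega,
      gaussBinom_succ_succ]

lemma X_pow_succ_mul_gaussBinom_eq_sum (ℓ m : ℕ) :
    X ^ (m + 1) * gaussBinom (m + ℓ) (m + 1) =
      ∑ p ∈ antidiagonal m, X ^ (p.1 + 1) * gaussBinom ℓ (p.1 + 1) *
        (X ^ (p.2 * (ℓ - (p.1 + 1) + 1)) * gaussBinom (p.1 + 1 + p.2 - 1) p.2) := by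
  rw [add_comm m ℓ, gaussBinom_add, Nat.sum_antidiagonal_succ,
    gaussBinom_eq_zero_of_lt (Nat.lt_succ_self m), mul_zero, zero_add, mul_sum]
  refine sum_congr rfl fun ⟨i, j⟩ hij => ?_
  rw [HasAntidiagonal.mem_antidiagonal] at hij
  subst hij
  rw [show i + 1 + j - 1 = i + j by omega]
  rcases le_or_gt (i + 1) ℓ with hℓ | hℓ
  · obtain ⟨c, rfl⟩ := Nat.exists_eq_add_of_le hℓ
    rw [show i + 1 + c - (i + 1) = c by omega]
    ring
  · simp [gaussBinom_eq_zero_of_lt hℓ]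

lemma sum_range_sum_antidiagonal_eq_sum_Icc_sum_range {M : Type*} [AddCommMonoid M]
    (f : ℕ → ℕ → M) (k : ℕ) :
    ∑ m ∈ range k, ∑ p ∈ antidiagonal m, f (p.1 + 1) p.2 =
      ∑ i ∈ Icc 1 k, ∑ j ∈ range (k - i + 1), f i j := by
  rw [sum_sigma', sum_sigma']
  refine sum_nbij' (fun x ↦ ⟨x.2.1 + 1, x.2.2⟩) (fun x ↦ ⟨x.1 - 1 + x.2, (x.1 - 1, x.2)⟩)
    ?_ ?_ ?_ ?_ (fun _ _ ↦ rfl) <;>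
  simp only [mem_sigma, mem_range, mem_Icc, HasAntidiagonal.mem_antidiagonal, Sigma.forall,
    Prod.forall, Sigma.mk.injEq, Prod.mk.injEq, heq_eq_eq, and_true] <;> omega

/-- For all `k, ℓ ≥ 0`,
`[k+ℓ choose k]_q = 1 + ∑_{i=1}^{k} ∑_{j=0}^{k-i} q^i [ℓ choose i]_q q^{j(ℓ-i+1)} [i+j-1 choose j]_q`. -/
theorem gaussBinom_box_decomposition (k ℓ : ℕ) :
    gaussBinom (k + ℓ) k =
      1 + ∑ i ∈ Finset.Icc 1 k, ∑ j ∈ Finset.range (k - i + 1),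
        Polynomial.X ^ i * gaussBinom ℓ i *
          (Polynomial.X ^ (j * (ℓ - i + 1)) * gaussBinom (i + j - 1) j) := by
  rw [gaussBinom_add_self_eq_one_add_sum, ← sum_range_sum_antidiagonal_eq_sum_Icc_sum_range
    (fun i j ↦ X ^ i * gaussBinom ℓ i * (X ^ (j * (ℓ - i + 1)) * gaussBinom (i + j - 1) j))]
  simp only [X_pow_succ_mul_gaussBinom_eq_sum]
end

section
/- The set {e_λ : λ a partition of m fitting inside the k × ℓ rectangle} is a ℚ-basis of the degree-m component R^{k,ℓ}_m of the Grassmannian cohomology ring, for m ≤ k ≤ ℓ. -/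
open Finset

/-- The `i`-th elementary symmetric generator `e_i` of `ℚ[e₁,…,e_k]`, realized as
the variable `X (i-1)` of a polynomial ring in `k` indeterminates; `e_0 = 1` and
`e_i = 0` for `i > k`. -/
noncomputable def eGen (k : ℕ) (i : ℕ) : MvPolynomial (Fin k) ℚ :=
  if h : 1 ≤ i ∧ i ≤ k then MvPolynomial.X ⟨i - 1, by omega⟩
  else if i = 0 then 1 else 0

/-- The complete homogeneous symmetric function `h_d` expressed as a polynomial in
`e₁,…,e_k` via the relations `∑_{i+j=d} (-1)^i e_i h_j = 0` (equivalently, the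
Jacobi–Trudi determinant). -/
noncomputable def hGen (k : ℕ) : ℕ → MvPolynomial (Fin k) ℚ
  | 0 => 1
  | d + 1 => ∑ t ∈ Finset.range (d + 1),
      (-1 : MvPolynomial (Fin k) ℚ) ^ t * eGen k (t + 1) * hGen k (d - t)
  decreasing_by exact Nat.lt_succ_of_le (Nat.sub_le d t)

/-- `h_n` for an integer index: zero for negative `n`. -/
noncomputable def hGenZ (k : ℕ) (n : ℤ) : MvPolynomial (Fin k) ℚ :=
  if 0 ≤ n then hGen k n.toNat else 0

/-- The ideal `(h_{ℓ+1}, …, h_{ℓ+k})` of `ℚ[e₁,…,e_k]`. -/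
noncomputable def grassIdeal (k ℓ : ℕ) : Ideal (MvPolynomial (Fin k) ℚ) :=
  Ideal.span ((fun i => hGen k (ℓ + i)) '' (Set.Icc 1 k))

/-- The cohomology ring `R^{k,ℓ} = ℚ[e₁,…,e_k]/(h_{ℓ+1},…,h_{ℓ+k})` of the
Grassmannian `G(k, ℂ^{k+ℓ})`. -/
noncomputable abbrev GrassCohomology (k ℓ : ℕ) : Type :=
  MvPolynomial (Fin k) ℚ ⧸ grassIdeal k ℓ

/-- The image of `e_i` in `R^{k,ℓ}`. -/
noncomputable def eR (k ℓ : ℕ) (i : ℕ) : GrassCohomology k ℓ :=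
  Ideal.Quotient.mk (grassIdeal k ℓ) (eGen k i)

/-- The Schur class `s_{ℓ^k}` of the full `k × ℓ` rectangle in `R^{k,ℓ}`, given by
the Jacobi–Trudi determinant `det(h_{ℓ + j - i})`. -/
noncomputable def sRect (k ℓ : ℕ) : GrassCohomology k ℓ :=
  Ideal.Quotient.mk (grassIdeal k ℓ)
    (Matrix.det (fun i j : Fin k => hGenZ k ((ℓ : ℤ) + (j : ℤ) - (i : ℤ))))

/-- The degree-`d` graded component of `R^{k,ℓ}`, where `e_i` has degree `i`. -/
noncomputable def grassComponent (k ℓ d : ℕ) : Submodule ℚ (GrassCohomology k ℓ) :=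
  Submodule.map (Ideal.Quotient.mkₐ ℚ (grassIdeal k ℓ)).toLinearMap
    (MvPolynomial.weightedHomogeneousSubmodule ℚ (fun i : Fin k => (i : ℕ) + 1) d)

/-- Partitions of `m` whose Young diagram fits inside the `k × ℓ` rectangle. -/
abbrev BoxPartition (k ℓ m : ℕ) : Type :=
  {p : m.Partition // p.parts.card ≤ k ∧ ∀ a ∈ p.parts, a ≤ ℓ}

/-- `e_λ = e_{λ₁} e_{λ₂} ⋯` in `R^{k,ℓ}`. -/
noncomputable def ePart (k ℓ m : ℕ) (p : Nat.Partition m) : GrassCohomology k ℓ :=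
  Ideal.Quotient.mk (grassIdeal k ℓ) (p.parts.map (eGen k)).prod

/-- The `i`-th largest part of the partition `p` (`0`-indexed; `0` if `i` exceeds
the number of parts). -/
def partFn {m : ℕ} (p : Nat.Partition m) (i : ℕ) : ℕ :=
  ((p.parts.sort (· ≤ ·)).reverse).getD i 0

/-- The Schur class `s_λ` in `R^{k,ℓ}`, via the Jacobi–Trudi determinant
`det (h_{λ_i + j - i})`. -/
noncomputable def sPart (k ℓ m : ℕ) (p : Nat.Partition m) : GrassCohomology k ℓ :=
  Ideal.Quotient.mk (grassIdeal k ℓ)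
    (Matrix.det (fun i j : Fin k => hGenZ k ((partFn p i : ℤ) + (j : ℤ) - (i : ℤ))))

section EPartBasisAux

open MvPolynomial

/-- `eGen k i` is weighted homogeneous of degree `i`. -/
lemma eGen_homog (k i : ℕ) :
    IsWeightedHomogeneous (fun j : Fin k => (j : ℕ) + 1) (eGen k i) i := by
  unfold eGen
  split_ifs with h h0
  · have hx := isWeightedHomogeneous_X (R := ℚ) (fun j : Fin k => (j : ℕ) + 1)
      (⟨i - 1, by omega⟩ : Fin k)
    have : ((⟨i - 1, by omega⟩ : Fin k) : ℕ) + 1 = i := by simp; omega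
    rwa [this] at hx
  · subst h0; exact isWeightedHomogeneous_one _ _
  · exact isWeightedHomogeneous_zero _ _ _

/-- `hGen k d` is weighted homogeneous of degree `d`. -/
lemma hGen_homog (k : ℕ) : ∀ d, IsWeightedHomogeneous (fun j : Fin k => (j : ℕ) + 1) (hGen k d) d := by
  intro d
  induction d using Nat.strong_induction_on with
  | _ d ih =>
    match d with
    | 0 => rw [hGen]; exact isWeightedHomogeneous_one _ _
    | d + 1 =>
      rw [hGen]
      apply IsWeightedHomogeneous.sum
      intro t ht
      rw [Finset.mem_range] at ht
      have h1 : IsWeightedHomogeneous (fun j : Fin k => (j : ℕ) + 1)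
          ((-1 : MvPolynomial (Fin k) ℚ) ^ t) 0 := by
        have : ((-1 : MvPolynomial (Fin k) ℚ)) ^ t = C ((-1 : ℚ) ^ t) := by
          rw [map_pow, map_neg, map_one]
        rw [this]
        exact isWeightedHomogeneous_C _ _
      have h2 := (h1.mul (eGen_homog k (t + 1))).mul (ih (d - t) (by omega))
      have : 0 + (t + 1) + (d - t) = d + 1 := by omega
      rwa [this] at h2

lemma comp_mul_homog {k : ℕ} {w : Fin k → ℕ} {s : MvPolynomial (Fin k) ℚ} {e n : ℕ}
    (hs : IsWeightedHomogeneous w s e) (h : n < e) (r : MvPolynomial (Fin k) ℚ) :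
    weightedHomogeneousComponent w n (r * s) = 0 := by
  classical
  ext d
  rw [coeff_weightedHomogeneousComponent, coeff_zero]
  split_ifs with hd
  · rw [coeff_mul]
    apply Finset.sum_eq_zero
    rintro ⟨x, y⟩ hxy
    rw [Finset.HasAntidiagonal.mem_antidiagonal] at hxy
    by_cases hy : coeff y s = 0
    · rw [hy, mul_zero]
    · exfalso
      have he : (Finsupp.weight w) y = e := hs hy
      have : (Finsupp.weight w) d = (Finsupp.weight w) x + e := by
        rw [← hxy, map_add, he]
      omega
  · rfl

/-- A weighted homogeneous polynomial of degree `m ≤ ℓ` in the Grassmann ideal is zero. -/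
lemma homog_eq_zero_of_mem (k ℓ m : ℕ) (hm : m ≤ ℓ) {p : MvPolynomial (Fin k) ℚ}
    (hp : IsWeightedHomogeneous (fun j : Fin k => (j : ℕ) + 1) p m)
    (hpI : p ∈ grassIdeal k ℓ) : p = 0 := by
  obtain ⟨c, hc, hsum⟩ := Submodule.mem_span_set.mp hpI
  rw [← hp.weightedHomogeneousComponent_same, ← hsum, Finsupp.sum, map_sum]
  apply Finset.sum_eq_zero
  intro s hs
  obtain ⟨i, hi, rfl⟩ := hc hs
  rw [Set.mem_Icc] at hi
  rw [smul_eq_mul]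
  exact comp_mul_homog (hGen_homog k (ℓ + i)) (by omega) _

/-- The exponent vector attached to a partition: multiplicities of parts. -/
noncomputable def toMon (k m : ℕ) (p : Nat.Partition m) : Fin k →₀ ℕ :=
  Finsupp.equivFunOnFinite.symm fun i => p.parts.count ((i : ℕ) + 1)

/-- The multiset of parts attached to an exponent vector. -/
def fromMul (k : ℕ) (β : Fin k →₀ ℕ) : Multiset ℕ :=
  ∑ i : Fin k, Multiset.replicate (β i) ((i : ℕ) + 1)

lemma count_fromMul (k : ℕ) (β : Fin k →₀ ℕ) (j : Fin k) :
    (fromMul k β).count ((j : ℕ) + 1) = β j := by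
  classical
  rw [fromMul, Multiset.count_sum']
  rw [Finset.sum_eq_single j]
  · simp [Multiset.count_replicate]
  · intro i _ hij
    rw [Multiset.count_replicate, if_neg]
    intro hcontra
    exact hij (by ext; omega)
  · intro hj; exact absurd (Finset.mem_univ j) hj

lemma mem_fromMul {k : ℕ} {β : Fin k →₀ ℕ} {a : ℕ} (ha : a ∈ fromMul k β) :
    1 ≤ a ∧ a ≤ k := by
  rw [fromMul, Multiset.mem_sum] at ha
  obtain ⟨i, _, hi⟩ := ha
  have := Multiset.eq_of_mem_replicate hi
  have := i.isLt
  omega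

/-- `Multiset.sum` as an additive monoid hom. -/
def msum : Multiset ℕ →+ ℕ := ⟨⟨Multiset.sum, Multiset.sum_zero⟩, Multiset.sum_add⟩

def mcard : Multiset ℕ →+ ℕ := ⟨⟨fun s => Multiset.card s, rfl⟩, Multiset.card_add⟩

lemma weight_fin (k : ℕ) (β : Fin k →₀ ℕ) :
    Finsupp.weight (fun j : Fin k => (j : ℕ) + 1) β = ∑ i : Fin k, β i * ((i : ℕ) + 1) := by
  rw [Finsupp.weight_apply, Finsupp.sum_fintype]
  · simp [mul_comm]
  · intro i; simp

lemma sum_fromMul (k : ℕ) (β : Fin k →₀ ℕ) :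
    (fromMul k β).sum = Finsupp.weight (fun j : Fin k => (j : ℕ) + 1) β := by
  have : (fromMul k β).sum = msum (fromMul k β) := rfl
  rw [this, fromMul, map_sum, weight_fin]
  congr 1
  ext i
  show (Multiset.replicate (β i) ((i : ℕ) + 1)).sum = _
  rw [Multiset.sum_replicate, smul_eq_mul]

lemma card_fromMul (k : ℕ) (β : Fin k →₀ ℕ) :
    Multiset.card (fromMul k β) = ∑ i : Fin k, β i := by
  have : Multiset.card (fromMul k β) = mcard (fromMul k β) := rfl
  rw [this, fromMul, map_sum]
  congr 1
  ext i
  show Multiset.card (Multiset.replicate (β i) ((i : ℕ) + 1)) = _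
  rw [Multiset.card_replicate]

/-- The partition attached to an exponent vector of weight `m`. -/
def fromMonPart (k m : ℕ) (β : Fin k →₀ ℕ)
    (hβ : Finsupp.weight (fun j : Fin k => (j : ℕ) + 1) β = m) : Nat.Partition m where
  parts := fromMul k β
  parts_pos := fun ha => (mem_fromMul ha).1
  parts_sum := by rw [sum_fromMul, hβ]

lemma part_le_of_mem {m : ℕ} (p : Nat.Partition m) {a : ℕ} (ha : a ∈ p.parts) : a ≤ m := by
  have := Multiset.le_sum_of_mem ha
  rwa [p.parts_sum] at this

lemma fromMul_toMon (k m : ℕ) (p : Nat.Partition m) (hk : ∀ a ∈ p.parts, a ≤ k) :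
    fromMul k (toMon k m p) = p.parts := by
  classical
  ext c
  by_cases hc : 1 ≤ c ∧ c ≤ k
  · have hceq : c = ((⟨c - 1, by omega⟩ : Fin k) : ℕ) + 1 := by simp; omega
    rw [hceq, count_fromMul]
    simp [toMon]
  · have h1 : (fromMul k (toMon k m p)).count c = 0 := by
      rw [Multiset.count_eq_zero]
      intro hmem
      exact hc (mem_fromMul hmem)
    rw [h1, eq_comm, Multiset.count_eq_zero]
    intro hmem
    exact hc ⟨p.parts_pos hmem, hk c hmem⟩

lemma weight_toMon (k m : ℕ) (p : Nat.Partition m) (hk : ∀ a ∈ p.parts, a ≤ k) :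
    Finsupp.weight (fun j : Fin k => (j : ℕ) + 1) (toMon k m p) = m := by
  rw [← sum_fromMul, fromMul_toMon k m p hk, p.parts_sum]

lemma prod_eGen (k : ℕ) (s : Multiset ℕ) (hs : ∀ a ∈ s, 1 ≤ a ∧ a ≤ k) :
    (s.map (eGen k)).prod =
      MvPolynomial.monomial (Finsupp.equivFunOnFinite.symm fun i : Fin k => s.count ((i : ℕ) + 1)) 1 := by
  classical
  induction s using Multiset.induction with
  | empty =>
    have h0 : (Finsupp.equivFunOnFinite.symm fun i : Fin k => (0 : Multiset ℕ).count ((i : ℕ) + 1))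
        = 0 := by ext i; simp
    rw [Multiset.map_zero, Multiset.prod_zero, h0]
    simp
  | cons a s ih =>
    have ha := hs a (Multiset.mem_cons_self a s)
    rw [Multiset.map_cons, Multiset.prod_cons,
      ih (fun b hb => hs b (Multiset.mem_cons_of_mem hb))]
    have hE : eGen k a = X ⟨a - 1, by omega⟩ := by rw [eGen, dif_pos ha]
    rw [hE, X, monomial_mul, one_mul]
    have hexp : (Finsupp.single (⟨a - 1, by omega⟩ : Fin k) 1 +
        Finsupp.equivFunOnFinite.symm fun i : Fin k => s.count ((i : ℕ) + 1)) =
        Finsupp.equivFunOnFinite.symm fun i : Fin k => (a ::ₘ s).count ((i : ℕ) + 1) := by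
      ext j
      simp only [Finsupp.add_apply, Finsupp.equivFunOnFinite_symm_apply_apply,
        Finsupp.single_apply, Multiset.count_cons]
      by_cases hj : (⟨a - 1, by omega⟩ : Fin k) = j
      · rw [if_pos hj]
        have : (j : ℕ) + 1 = a := by rw [← hj]; simp; omega
        rw [if_pos this]
        omega
      · rw [if_neg hj, if_neg]
        · omega
        · intro hcontra
          exact hj (by ext; simp; omega)
    rw [hexp]

end EPartBasisAux

/-- For `m ≤ k ≤ ℓ`, the family `{e_λ}`, indexed by partitions
`λ` of `m` inside the `k × ℓ` rectangle, is a `ℚ`-basis of the degree-`m`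
component `R^{k,ℓ}_m`. -/
theorem ePart_basis (k ℓ m : ℕ) (hmk : m ≤ k) (hkl : k ≤ ℓ) :
    ∃ b : Module.Basis (BoxPartition k ℓ m) ℚ (grassComponent k ℓ m),
      ∀ p : BoxPartition k ℓ m, (b p : GrassCohomology k ℓ) = ePart k ℓ m p.1 := by
  classical
  have hpartk : ∀ p : Nat.Partition m, ∀ a ∈ p.parts, a ≤ k :=
    fun p a ha => le_trans (part_le_of_mem p ha) hmk
  set w : Fin k → ℕ := fun j : Fin k => (j : ℕ) + 1 with hwdef
  set S : Set (Fin k →₀ ℕ) := {d | Finsupp.weight w d = m} with hSdef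
  have hmemS : ∀ p : BoxPartition k ℓ m, toMon k m p.1 ∈ S := fun p =>
    weight_toMon k m p.1 (hpartk p.1)
  have hfromcard : ∀ β ∈ S, Multiset.card (fromMul k β) ≤ k := by
    intro β hβ
    rw [card_fromMul]
    calc ∑ i : Fin k, β i ≤ ∑ i : Fin k, β i * ((i : ℕ) + 1) :=
          Finset.sum_le_sum fun i _ => Nat.le_mul_of_pos_right _ (by omega)
      _ = m := by rw [← weight_fin]; exact hβ
      _ ≤ k := hmk
  let E : BoxPartition k ℓ m ≃ S :=
  { toFun := fun p => ⟨toMon k m p.1, hmemS p⟩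
    invFun := fun β => ⟨fromMonPart k m β.1 β.2, by
      refine ⟨hfromcard β.1 β.2, ?_⟩
      intro a ha
      have := mem_fromMul (β := β.1) ha
      omega⟩
    left_inv := by
      rintro ⟨p, hp⟩
      apply Subtype.ext
      apply Nat.Partition.ext
      exact fromMul_toMon k m p (hpartk p)
    right_inv := by
      rintro ⟨β, hβ⟩
      apply Subtype.ext
      ext j
      show (toMon k m (fromMonPart k m β hβ)) j = β j
      simp only [toMon, Finsupp.equivFunOnFinite_symm_apply_apply]
      exact count_fromMul k β j }
  set Wsub := MvPolynomial.weightedHomogeneousSubmodule ℚ w m with hWsubdef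
  let q := (Ideal.Quotient.mkₐ ℚ (grassIdeal k ℓ)).toLinearMap
  have hmap : ∀ x ∈ Wsub, q x ∈ grassComponent k ℓ m := fun x hx =>
    Submodule.mem_map_of_mem hx
  let qW : Wsub →ₗ[ℚ] grassComponent k ℓ m := q.restrict hmap
  have hqW : ∀ x : Wsub, (qW x : GrassCohomology k ℓ) =
      Ideal.Quotient.mk (grassIdeal k ℓ) (x : MvPolynomial (Fin k) ℚ) := fun x => rfl
  have hinj : Function.Injective qW := by
    intro x y hxy
    have h0 : Ideal.Quotient.mk (grassIdeal k ℓ) ((x : MvPolynomial (Fin k) ℚ) - y) = 0 := by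
      rw [map_sub, sub_eq_zero, ← hqW x, ← hqW y, hxy]
    rw [Ideal.Quotient.eq_zero_iff_mem] at h0
    have hmem : (x : MvPolynomial (Fin k) ℚ) - (y : MvPolynomial (Fin k) ℚ) ∈ Wsub :=
      Wsub.sub_mem x.2 y.2
    have hz := homog_eq_zero_of_mem k ℓ m (le_trans hmk hkl) hmem h0
    exact Subtype.ext (by rwa [sub_eq_zero] at hz)
  have hsurj : Function.Surjective qW := by
    rintro ⟨z, x, hx, rfl⟩
    exact ⟨⟨x, hx⟩, rfl⟩
  let φ : Wsub ≃ₗ[ℚ] grassComponent k ℓ m := LinearEquiv.ofBijective qW ⟨hinj, hsurj⟩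
  have hWS : Wsub = AddMonoidAlgebra.supported ℚ ℚ S :=
    MvPolynomial.weightedHomogeneousSubmodule_eq_finsupp_supported ℚ w m
  let repr : grassComponent k ℓ m ≃ₗ[ℚ] (BoxPartition k ℓ m →₀ ℚ) :=
    φ.symm ≪≫ₗ LinearEquiv.ofEq Wsub (AddMonoidAlgebra.supported ℚ ℚ S) hWS ≪≫ₗ AddMonoidAlgebra.supportedEquivFinsupp S ≪≫ₗ
      Finsupp.domLCongr E.symm
  refine ⟨Module.Basis.ofRepr repr, ?_⟩
  intro p
  have hy : AddMonoidAlgebra.single (toMon k m p.1) (1 : ℚ) ∈ Wsub := by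
    rw [MvPolynomial.single_eq_monomial]
    exact MvPolynomial.isWeightedHomogeneous_monomial w _ _ (hmemS p)
  set y : Wsub := ⟨AddMonoidAlgebra.single (toMon k m p.1) (1 : ℚ), hy⟩ with hydef
  have hrepr : repr (φ y) = Finsupp.single p 1 := by
    simp only [repr, LinearEquiv.trans_apply]
    rw [φ.symm_apply_apply]
    have h1 : (AddMonoidAlgebra.supportedEquivFinsupp S) ((LinearEquiv.ofEq Wsub (AddMonoidAlgebra.supported ℚ ℚ S) hWS) y) =
        Finsupp.single (E p) 1 := by
      ext x
      show (Finsupp.subtypeDomain (· ∈ S) (Finsupp.single (toMon k m p.1) (1 : ℚ))) x =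
        Finsupp.single (E p) 1 x
      rcases x with ⟨x, hx⟩
      rw [Finsupp.subtypeDomain_apply]
      simp only [Finsupp.single_apply]
      have : ((E p : S) = ⟨x, hx⟩) ↔ (toMon k m p.1 = x) := by
        constructor
        · intro h; exact congrArg Subtype.val h
        · intro h; exact Subtype.ext h
      split_ifs with h1 h2 h2
      · rfl
      · exact absurd (this.mpr h1) h2
      · exact absurd (this.mp h2) h1
      · rfl
    refine Eq.trans (congrArg (Finsupp.domLCongr E.symm) h1) ?_
    rw [Finsupp.domLCongr_single]
    congr 1
    exact E.symm_apply_apply p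
  have hb : (Module.Basis.ofRepr repr) p = φ y := by
    have h2 := congrArg repr.symm hrepr
    rw [repr.symm_apply_apply] at h2
    show repr.symm (Finsupp.single p 1) = φ y
    exact h2.symm
  rw [hb]
  have hcoe : (φ y : GrassCohomology k ℓ) =
      Ideal.Quotient.mk (grassIdeal k ℓ) (AddMonoidAlgebra.single (toMon k m p.1) (1 : ℚ)) := rfl
  rw [hcoe, MvPolynomial.single_eq_monomial, ePart]
  congr 1
  rw [prod_eGen k p.1.parts (fun a ha => ⟨p.1.parts_pos ha, hpartk p.1 a ha⟩)]
  rfl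
end
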